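/- Let G be a graph on vertex set V with Laplacian L and per-vertex matrices H_n (M columns each). Let 𝒳 ⊆ V induce a connected subgraph with Laplacian L_𝒳, and suppose Σ_{i∈𝒳} H_i^T H_i is invertible. If α, β > 0 are such that J = β(L ⊗ I_M) + α D_H^T D_H is positive definite with λ_max(J) ≤ 1, then J^𝒳 = β(L_𝒳 ⊗ I_M) + α (D_H^𝒳)^T D_H^𝒳 is also positive definite and satisfies λ_max(J^𝒳) ≤ 1. -/

import Mathlib

open scoped Kronecker
open Matrix Filter

/-- The set of eigenvalues of a matrix. -/
def eigSet {ι : Type*} [Fintype ι] (A : Matrix ι ι ℝ) : Set ℝ :=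
  {t : ℝ | ∃ v : ι → ℝ, v ≠ 0 ∧ A.mulVec v = t • v}

/-- Largest eigenvalue of a (symmetric) real matrix. -/
noncomputable def lmax {ι : Type*} [Fintype ι] (A : Matrix ι ι ℝ) : ℝ := sSup (eigSet A)

/-- Smallest eigenvalue of a (symmetric) real matrix. -/
noncomputable def lmin {ι : Type*} [Fintype ι] (A : Matrix ι ι ℝ) : ℝ := sInf (eigSet A)

/-- Second-smallest Laplacian eigenvalue (algebraic connectivity):
smallest eigenvalue on the subspace orthogonal to the all-ones vector. -/
noncomputable def lambda2 {N : ℕ} (L : Matrix (Fin N) (Fin N) ℝ) : ℝ :=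
  sInf {t : ℝ | ∃ v : Fin N → ℝ, v ≠ 0 ∧ (∑ i, v i) = 0 ∧ L.mulVec v = t • v}

/-- Block diagonal matrix with square blocks `A i`, i.e. `Σ_i E_iᵀ (A i) E_i`. -/
def blkOf {ι : Type*} [DecidableEq ι] {M : ℕ} (A : ι → Matrix (Fin M) (Fin M) ℝ) :
    Matrix (ι × Fin M) (ι × Fin M) ℝ :=
  Matrix.of fun p q => if p.1 = q.1 then A p.1 p.2 q.2 else 0

/-- Euclidean norm of a finitely supported real vector. -/
noncomputable def enorm {ι : Type*} [Fintype ι] (v : ι → ℝ) : ℝ :=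
  Real.sqrt (∑ i, v i ^ 2)

/-!
Both `J` and `J^𝒳` are positive semidefinite sums of a Kronecker-lifted graph Laplacian and a
block-diagonal Gram matrix. A vector in the kernel of `J^𝒳` lies in the kernel of both parts;
connectedness of the induced graph makes it constant across the vertices of `𝒳`, say equal to
`c`, and then `(∑_{i ∈ 𝒳} H_iᵀ H_i) c = 0` forces `c = 0`.

For the eigenvalue bound, in the Loewner order `J^𝒳` lies below the principal submatrix of `J`
on the `𝒳`-blocks (the two differ by `β` times the diagonal of edges leaving `𝒳`), and every
principal submatrix of `J` lies below `λ_max(J) I ≤ I`.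
-/

open scoped MatrixOrder

section Spectral

variable {ι : Type*} [Fintype ι] [DecidableEq ι] {A : Matrix ι ι ℝ}

lemma eigSet_subset_spectrum (A : Matrix ι ι ℝ) : eigSet A ⊆ spectrum ℝ A := by
  rintro t ⟨v, hv, hAv⟩
  rw [← Matrix.spectrum_toLin', ← Module.End.hasEigenvalue_iff_mem_spectrum]
  exact Module.End.hasEigenvalue_of_hasEigenvector
    ⟨Module.End.mem_eigenspace_iff.mpr (by simpa using hAv), hv⟩

lemma le_lmax {v : ι → ℝ} {t : ℝ} (hv : v ≠ 0) (hAv : A *ᵥ v = t • v) : t ≤ lmax A :=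
  le_csSup ((Matrix.finite_spectrum A).subset (eigSet_subset_spectrum A)).bddAbove ⟨v, hv, hAv⟩

lemma Matrix.IsHermitian.le_lmax_smul_one (hA : A.IsHermitian) : A ≤ lmax A • 1 := by
  have hB : (lmax A • 1 - A).IsHermitian := (isHermitian_one.smul (star_trivial _)).sub hA
  refine Matrix.le_iff.mpr (hB.posSemidef_iff_eigenvalues_nonneg.mpr fun i => ?_)
  have hu₀ : ⇑(hB.eigenvectorBasis i) ≠ 0 := by
    simpa using hB.eigenvectorBasis.orthonormal.ne_zero i
  set u := ⇑(hB.eigenvectorBasis i)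
  have hu : (lmax A • 1 - A) *ᵥ u = hB.eigenvalues i • u := hB.mulVec_eigenvectorBasis i
  have hAu : A *ᵥ u = (lmax A - hB.eigenvalues i) • u := by
    rw [sub_mulVec, smul_mulVec, one_mulVec] at hu
    rw [sub_smul, ← hu, sub_sub_cancel]
  have hle := le_lmax hu₀ hAu
  simp only [Pi.zero_apply]
  linarith

-- `0 ≤ c` covers the empty index type, where `lmax A = sSup ∅ = 0`.
lemma lmax_le_of_le_smul_one {c : ℝ} (hA : A ≤ c • 1) (hc : 0 ≤ c) : lmax A ≤ c := by
  refine Real.sSup_le (fun t ⟨v, hv, hAv⟩ => ?_) hc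
  have hquad := (Matrix.le_iff.mp hA).dotProduct_mulVec_nonneg v
  simp only [star_trivial, sub_mulVec, smul_mulVec, one_mulVec, hAv, dotProduct_sub,
    dotProduct_smul, smul_eq_mul, sub_nonneg] at hquad
  have hvv : 0 < v ⬝ᵥ v := by
    simpa using dotProduct_star_self_pos_iff.mpr hv
  exact le_of_mul_le_mul_right hquad hvv

end Spectral

section LoewnerOrder

lemma Matrix.kronecker_one_le_kronecker_one {n : Type*} [Fintype n] {M : ℕ} {X Y : Matrix n n ℝ}
    (h : X ≤ Y) :
    X ⊗ₖ (1 : Matrix (Fin M) (Fin M) ℝ) ≤ Y ⊗ₖ (1 : Matrix (Fin M) (Fin M) ℝ) := by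
  rw [Matrix.le_iff] at h ⊢
  convert h.kronecker (PosSemidef.one (n := Fin M)) using 1
  ext p q
  simp [sub_mul]

lemma Matrix.submatrix_le_submatrix {n m : Type*} [Fintype n] [Fintype m] {X Y : Matrix n n ℝ}
    (h : X ≤ Y) (e : m → n) : X.submatrix e e ≤ Y.submatrix e e := by
  rw [Matrix.le_iff] at h ⊢
  simpa [submatrix_sub] using h.submatrix e

lemma Matrix.PosSemidef.posDef_smul_add_smul {n : Type*} [Fintype n] {P Q : Matrix n n ℝ}
    {a b : ℝ} (hP : P.PosSemidef) (hQ : Q.PosSemidef) (ha : 0 < a) (hb : 0 < b)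
    (hker : ∀ x, P *ᵥ x = 0 → Q *ᵥ x = 0 → x = 0) : (a • P + b • Q).PosDef := by
  refine posDef_iff_dotProduct_mulVec.mpr
    ⟨((hP.smul ha.le).add (hQ.smul hb.le)).isHermitian, fun x hx => ?_⟩
  have hPx := hP.dotProduct_mulVec_zero_iff x
  have hQx := hQ.dotProduct_mulVec_zero_iff x
  have hPx₀ := hP.dotProduct_mulVec_nonneg x
  have hQx₀ := hQ.dotProduct_mulVec_nonneg x
  simp only [star_trivial] at hPx hQx hPx₀ hQx₀ ⊢
  rw [add_mulVec, dotProduct_add, smul_mulVec, smul_mulVec, dotProduct_smul, dotProduct_smul,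
    smul_eq_mul, smul_eq_mul]
  by_contra hle
  refine hx (hker x (hPx.mp ?_) (hQx.mp ?_)) <;> nlinarith

end LoewnerOrder

lemma Matrix.kronecker_one_mulVec_apply {V : Type*} [Fintype V] {M : ℕ} (L : Matrix V V ℝ)
    (x : V × Fin M → ℝ) (i : V) (m : Fin M) :
    ((L ⊗ₖ (1 : Matrix (Fin M) (Fin M) ℝ)) *ᵥ x) (i, m) = (L *ᵥ fun j => x (j, m)) i := by
  simp [mulVec, dotProduct, Fintype.sum_prod_type, one_apply]

namespace SimpleGraph

variable {V : Type*} [Fintype V] [DecidableEq V] (G : SimpleGraph V) [DecidableRel G.Adj]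
  (s : Set V) [DecidablePred (· ∈ s)] [DecidableRel (G.induce s).Adj]

lemma submatrix_lapMatrix_sub_lapMatrix_induce :
    (G.lapMatrix ℝ).submatrix (↑) (↑) - (G.induce s).lapMatrix ℝ =
      diagonal fun i : s => (G.degree i : ℝ) - (G.induce s).degree i := by
  ext i j
  by_cases hij : i = j
  · subst hij
    simp [lapMatrix, degMatrix]
  · simp [lapMatrix, degMatrix, hij, Subtype.coe_ne_coe.mpr hij]

lemma lapMatrix_induce_le_submatrix :
    (G.induce s).lapMatrix ℝ ≤ (G.lapMatrix ℝ).submatrix (↑) (↑) := by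
  rw [Matrix.le_iff, G.submatrix_lapMatrix_sub_lapMatrix_induce s, posSemidef_diagonal_iff]
  intro i
  have hdeg : (G.induce s).degree i ≤ G.degree i := (Copy.induce G s).degree_le i
  simpa using hdeg

end SimpleGraph

section BlockDiagonal

variable {ι : Type*} [DecidableEq ι] {M : ℕ} (A : ι → Matrix (Fin M) (Fin M) ℝ)

lemma blkOf_eq_submatrix_blockDiagonal :
    blkOf A = (blockDiagonal A).submatrix Prod.swap Prod.swap := by
  ext p q
  simp [blkOf, blockDiagonal_apply]

lemma blkOf_mulVec_apply [Fintype ι] (x : ι × Fin M → ℝ) (i : ι) (m : Fin M) :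
    (blkOf A *ᵥ x) (i, m) = (A i *ᵥ fun m' => x (i, m')) m := by
  simp [blkOf, mulVec, dotProduct, Fintype.sum_prod_type]

lemma dotProduct_blkOf_mulVec [Fintype ι] (x : ι × Fin M → ℝ) :
    x ⬝ᵥ (blkOf A *ᵥ x) = ∑ i, (fun m => x (i, m)) ⬝ᵥ (A i *ᵥ fun m => x (i, m)) := by
  simp only [dotProduct, Fintype.sum_prod_type, blkOf_mulVec_apply]

lemma blkOf_submatrix {κ : Type*} [DecidableEq κ] {e : κ → ι} (he : Function.Injective e) :
    (blkOf A).submatrix (Prod.map e id) (Prod.map e id) = blkOf fun k => A (e k) := by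
  ext p q
  simp [blkOf, he.eq_iff]

variable {A}

lemma posSemidef_blkOf [Fintype ι] (hA : ∀ i, (A i).PosSemidef) : (blkOf A).PosSemidef := by
  refine .of_dotProduct_mulVec_nonneg ?_ fun x => ?_
  · rw [blkOf_eq_submatrix_blockDiagonal]
    exact (isHermitian_blockDiagonal_iff.mpr fun i => (hA i).isHermitian).submatrix _
  · rw [star_trivial, dotProduct_blkOf_mulVec]
    exact Finset.sum_nonneg fun i _ => by
      simpa using (hA i).dotProduct_mulVec_nonneg fun m => x (i, m)

end BlockDiagonal

section CoupledMatrix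

variable {V : Type*} [Fintype V] [DecidableEq V] (G : SimpleGraph V) [DecidableRel G.Adj]
  {M : ℕ} (A : V → Matrix (Fin M) (Fin M) ℝ) (α β : ℝ)

/-- The matrix `J = β (L ⊗ I_M) + α D_Hᵀ D_H` of the paper, with `A i = H_iᵀ H_i`. -/
def coupledMatrix : Matrix (V × Fin M) (V × Fin M) ℝ :=
  β • (G.lapMatrix ℝ ⊗ₖ (1 : Matrix (Fin M) (Fin M) ℝ)) + α • blkOf A

variable {G A α β}

lemma posSemidef_coupledMatrix (hA : ∀ i, (A i).PosSemidef) (hα : 0 ≤ α) (hβ : 0 ≤ β) :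
    (coupledMatrix G A α β).PosSemidef :=
  (((G.posSemidef_lapMatrix ℝ).kronecker PosSemidef.one).smul hβ).add
    ((posSemidef_blkOf hA).smul hα)

lemma coupledMatrix_induce_le_submatrix (s : Set V) [DecidablePred (· ∈ s)]
    [DecidableRel (G.induce s).Adj] (hβ : 0 ≤ β) :
    coupledMatrix (G.induce s) (fun i : s => A i) α β ≤
      (coupledMatrix G A α β).submatrix (Prod.map (↑) id) (Prod.map (↑) id) := by
  simp only [coupledMatrix, submatrix_add, submatrix_smul, Pi.add_apply, Pi.smul_apply,
    blkOf_submatrix A Subtype.val_injective, ← kroneckerMap_submatrix_left]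
  gcongr
  exact Matrix.kronecker_one_le_kronecker_one (G.lapMatrix_induce_le_submatrix s)

lemma posDef_coupledMatrix (hconn : G.Connected) (hA : ∀ i, (A i).PosSemidef)
    (hunit : IsUnit (∑ i, A i)) (hα : 0 < α) (hβ : 0 < β) :
    (coupledMatrix G A α β).PosDef := by
  refine ((G.posSemidef_lapMatrix ℝ).kronecker PosSemidef.one).posDef_smul_add_smul
    (posSemidef_blkOf hA) hβ hα fun x hLx hBx => ?_
  have hconst : ∀ i j m, x (i, m) = x (j, m) := fun i j m =>
    (G.lapMatrix_mulVec_eq_zero_iff_forall_reachable.mp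
      (funext fun k => by simpa [kronecker_one_mulVec_apply] using congrFun hLx (k, m)))
      i j (hconn.preconnected i j)
  obtain ⟨i₀⟩ := hconn.nonempty
  have hAc : ∀ i, A i *ᵥ (fun m => x (i₀, m)) = 0 := fun i => funext fun m => by
    simpa [blkOf_mulVec_apply, hconst i i₀] using congrFun hBx (i, m)
  have hc : (fun m => x (i₀, m)) = 0 := mulVec_injective_of_isUnit hunit <| by
    rw [sum_mulVec, mulVec_zero]
    exact Finset.sum_eq_zero fun i _ => hAc i
  funext ⟨i, m⟩
  rw [hconst i i₀ m]
  exact congrFun hc m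

end CoupledMatrix

theorem stmt6_general {N M : ℕ} (G : SimpleGraph (Fin N)) [DecidableRel G.Adj]
    (P : Fin N → ℕ) (H : ∀ n, Matrix (Fin (P n)) (Fin M) ℝ)
    (𝒳 : Set (Fin N)) [DecidablePred (· ∈ 𝒳)]
    [DecidableRel (SimpleGraph.induce 𝒳 G).Adj]
    (hconn : (SimpleGraph.induce 𝒳 G).Connected)
    (hObs : IsUnit (∑ i : 𝒳, (H i.1)ᵀ * H i.1))
    (α β : ℝ) (hα : 0 < α) (hβ : 0 < β)
    (hmax : lmax (β • (G.lapMatrix ℝ ⊗ₖ (1 : Matrix (Fin M) (Fin M) ℝ)) +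
      α • blkOf (fun n => (H n)ᵀ * H n)) ≤ 1) :
    (β • ((SimpleGraph.induce 𝒳 G).lapMatrix ℝ ⊗ₖ (1 : Matrix (Fin M) (Fin M) ℝ)) +
      α • blkOf (fun i : 𝒳 => (H i.1)ᵀ * H i.1)).PosDef ∧
    lmax (β • ((SimpleGraph.induce 𝒳 G).lapMatrix ℝ ⊗ₖ (1 : Matrix (Fin M) (Fin M) ℝ)) +
      α • blkOf (fun i : 𝒳 => (H i.1)ᵀ * H i.1)) ≤ 1 := by
  have hgram : ∀ n, ((H n)ᵀ * H n).PosSemidef := fun n => by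
    simpa using posSemidef_conjTranspose_mul_self (H n)
  refine ⟨posDef_coupledMatrix hconn (fun i => hgram i) hObs hα hβ,
    lmax_le_of_le_smul_one ?_ zero_le_one⟩
  set J := coupledMatrix G (fun n => (H n)ᵀ * H n) α β
  have hJ : J.IsHermitian := (posSemidef_coupledMatrix hgram hα.le hβ.le).isHermitian
  set e := Prod.map ((↑) : 𝒳 → Fin N) (id : Fin M → Fin M)
  have he : Function.Injective e := Subtype.val_injective.prodMap Function.injective_id
  calc coupledMatrix (G.induce 𝒳) (fun i : 𝒳 => (H i)ᵀ * H i) α β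
      ≤ J.submatrix e e := coupledMatrix_induce_le_submatrix 𝒳 hβ.le
    _ ≤ (lmax J • 1 : Matrix (Fin N × Fin M) (Fin N × Fin M) ℝ).submatrix e e :=
        submatrix_le_submatrix hJ.le_lmax_smul_one e
    _ = lmax J • 1 := by rw [submatrix_smul, Pi.smul_apply, Pi.smul_apply, submatrix_one _ he]
    _ ≤ (1 : ℝ) • 1 := smul_le_smul_of_nonneg_right hmax PosSemidef.one.nonneg

theorem stmt6 {N M : ℕ} (G : SimpleGraph (Fin N)) [DecidableRel G.Adj]
    (P : Fin N → ℕ) (H : ∀ n, Matrix (Fin (P n)) (Fin M) ℝ)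
    (𝒳 : Set (Fin N)) [DecidablePred (· ∈ 𝒳)]
    [DecidableRel (SimpleGraph.induce 𝒳 G).Adj]
    (hconn : (SimpleGraph.induce 𝒳 G).Connected)
    (hObs : IsUnit (∑ i : 𝒳, (H i.1)ᵀ * H i.1))
    (α β : ℝ) (hα : 0 < α) (hβ : 0 < β)
    (hPD : (β • (G.lapMatrix ℝ ⊗ₖ (1 : Matrix (Fin M) (Fin M) ℝ)) +
      α • blkOf (fun n => (H n)ᵀ * H n)).PosDef)
    (hmax : lmax (β • (G.lapMatrix ℝ ⊗ₖ (1 : Matrix (Fin M) (Fin M) ℝ)) +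
      α • blkOf (fun n => (H n)ᵀ * H n)) ≤ 1) :
    (β • ((SimpleGraph.induce 𝒳 G).lapMatrix ℝ ⊗ₖ (1 : Matrix (Fin M) (Fin M) ℝ)) +
      α • blkOf (fun i : 𝒳 => (H i.1)ᵀ * H i.1)).PosDef ∧
    lmax (β • ((SimpleGraph.induce 𝒳 G).lapMatrix ℝ ⊗ₖ (1 : Matrix (Fin M) (Fin M) ℝ)) +
      α • blkOf (fun i : 𝒳 => (H i.1)ᵀ * H i.1)) ≤ 1 :=
  stmt6_general G P H 𝒳 hconn hObs α β hα hβ hmax
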